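/- Let H be the transitive closure of the δ-close relation on the states of a nondeterministic automaton. If H(s, s'), then for every letter σ and states q ∈ δ(s, σ), q' ∈ δ(s', σ), we have H(q, q'). -/
import Mathlib


variable {A Q : Type}

/-- Extension of a transition function to sets of states and finite words. -/
def extSet (δ : Q → A → Set Q) : Set Q → List A → Set Q
  | S, [] => S
  | S, a :: u => extSet δ (⋃ q ∈ S, δ q a) u

/-- Two states are δ-close if they are both reachable from some single state
via the same finite word. -/
def DeltaClose (δ : Q → A → Set Q) (s₁ s₂ : Q) : Prop :=
  ∃ (q : Q) (w : List A), s₁ ∈ extSet δ {q} w ∧ s₂ ∈ extSet δ {q} w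

lemma extSet_append_singleton (δ : Q → A → Set Q) (S : Set Q) (w : List A)
    (σ : A) {s q : Q} (hs : s ∈ extSet δ S w) (hq : q ∈ δ s σ) :
    q ∈ extSet δ S (w ++ [σ]) := by
  induction w generalizing S with
  | nil =>
    simp only [extSet] at hs ⊢
    exact Set.mem_biUnion hs hq
  | cons a u ih =>
    simp only [extSet] at hs ⊢
    exact ih _ hs

lemma deltaClose_step (δ : Q → A → Set Q) {s₁ s₂ : Q}
    (h : DeltaClose δ s₁ s₂) (σ : A) {q q' : Q}
    (hq : q ∈ δ s₁ σ) (hq' : q' ∈ δ s₂ σ) : DeltaClose δ q q' := by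
  obtain ⟨p, w, h₁, h₂⟩ := h
  exact ⟨p, w ++ [σ], extSet_append_singleton δ _ w σ h₁ hq,
    extSet_append_singleton δ _ w σ h₂ hq'⟩

/-- `H` propagates to successors: for `H` the transitive closure of the
δ-close relation, if `H(s,s')` then `H(q,q')` for all `σ`-successors `q` of
`s` and `q'` of `s'`. -/
theorem transClosure_deltaClose_propagates (δ : Q → A → Set Q)
    (htotal : ∀ q a, (δ q a).Nonempty)
    (s s' : Q) (h : Relation.TransGen (DeltaClose δ) s s')
    (σ : A) (q q' : Q) (hq : q ∈ δ s σ) (hq' : q' ∈ δ s' σ) :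
    Relation.TransGen (DeltaClose δ) q q' := by
  induction h generalizing q' with
  | single hss' =>
    exact Relation.TransGen.single (deltaClose_step δ hss' σ hq hq')
  | tail _ hbc ih =>
    obtain ⟨m, hm⟩ := htotal _ σ
    exact (ih m hm).tail (deltaClose_step δ hbc σ hm hq')
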